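/- arXiv:1805.12454 — 4 statements merged into one kernel-verified Lean document; each statement's English description precedes it below -/
import Mathlib

section
/- Let X be a spectral space. A subset of X is an intersection of quasi-compact open subsets of X (i.e., it is closed with respect to Hochster's inverse topology) if and only if it is saturated and quasi-compact. -/
open Set TopologicalSpace Topology

/-- A subset of a topological space is *inverse-closed* if it is an intersection of a
family of quasi-compact open subsets. -/
def InvClosed {X : Type*} [TopologicalSpace X] (Y : Set X) : Prop :=
  ∃ 𝒪 : Set (Set X), (∀ U ∈ 𝒪, IsOpen U ∧ IsCompact U) ∧ Y = ⋂₀ 𝒪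

/-- A subset is *saturated* if it is an intersection of open sets. -/
def IsSatd {X : Type*} [TopologicalSpace X] (Y : Set X) : Prop :=
  ∃ 𝒪 : Set (Set X), (∀ U ∈ 𝒪, IsOpen U) ∧ Y = ⋂₀ 𝒪

/-- A topological space is *spectral* if it is T0, quasi-compact, sober, and the
quasi-compact open subsets form a basis closed under finite intersections. -/
def IsSpectralSpace (X : Type*) [TopologicalSpace X] : Prop :=
  T0Space X ∧ CompactSpace X ∧ QuasiSober X ∧
    IsTopologicalBasis {U : Set X | IsOpen U ∧ IsCompact U} ∧
    ∀ U V : Set X, IsOpen U → IsCompact U → IsOpen V → IsCompact V → IsCompact (U ∩ V)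

/-- `𝒳(X)`: the nonempty inverse-closed subsets of `X`. -/
abbrev XCal (X : Type*) [TopologicalSpace X] : Type _ :=
  {Y : Set X // Y.Nonempty ∧ InvClosed Y}

/-- The Zariski topology on `𝒳(X)`, with basic open sets `𝒰(Ω) = {Y : Y ⊆ Ω}` for `Ω`
quasi-compact open in `X`. -/
instance XCal.instTop (X : Type*) [TopologicalSpace X] : TopologicalSpace (XCal X) :=
  generateFrom {S : Set (XCal X) | ∃ Ω : Set X, IsOpen Ω ∧ IsCompact Ω ∧
    S = {Y : XCal X | (Y : Set X) ⊆ Ω}}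

/-- The specialization-type order: `x ≤ y` iff `y ∈ closure {x}`. -/
def spord {X : Type*} [TopologicalSpace X] (x y : X) : Prop := y ∈ closure {x}

/-- Closure under generizations of a set `S`: all points `z ≤ s` for some `s ∈ S`. -/
def genOf {X : Type*} [TopologicalSpace X] (S : Set X) : Set X :=
  {z : X | ∃ s ∈ S, spord z s}

/-- A map is *spectral* if preimages of quasi-compact open sets are quasi-compact open. -/
def SpecMap {X Y : Type*} [TopologicalSpace X] [TopologicalSpace Y] (f : X → Y) : Prop :=
  ∀ Ω : Set Y, IsOpen Ω → IsCompact Ω → IsOpen (f ⁻¹' Ω) ∧ IsCompact (f ⁻¹' Ω)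

/-- The constructible topology on a spectral space: generated by the quasi-compact open
sets together with their complements. -/
def constructibleTop (X : Type*) [TopologicalSpace X] : TopologicalSpace X :=
  generateFrom ({U : Set X | IsOpen U ∧ IsCompact U} ∪
    {S : Set X | ∃ U : Set X, IsOpen U ∧ IsCompact U ∧ S = Uᶜ})

/-- `s` is the supremum of `S` for the order induced by the topology. -/
def IsSupOf {X : Type*} [TopologicalSpace X] (S : Set X) (s : X) : Prop :=
  (∀ c ∈ S, spord c s) ∧ ∀ t : X, (∀ c ∈ S, spord c t) → spord s t

/-- A map is sup-preserving if it sends existing finite suprema to suprema. -/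
def SupPreserving {X Y : Type*} [TopologicalSpace X] [TopologicalSpace Y] (f : X → Y) : Prop :=
  ∀ F : Set X, F.Finite → ∀ s : X, IsSupOf F s → IsSupOf (f '' F) (f s)

/-- A map is open onto its image. -/
def OpenOntoImage {X Y : Type*} [TopologicalSpace X] [TopologicalSpace Y] (f : X → Y) : Prop :=
  ∀ V : Set X, IsOpen V → ∃ W : Set Y, IsOpen W ∧ f '' V = W ∩ Set.range f


/-! Quasi-compact opens are clopen in the constructible topology, which is quasi-compact and finer
than the given one; hence an intersection of quasi-compact opens is constructibly closed, so
constructibly quasi-compact, so quasi-compact. Conversely, a quasi-compact set inside an open set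
`O` already lies in a quasi-compact open contained in `O`, so a saturated quasi-compact set is the
intersection of the quasi-compact opens containing it. -/

theorem IsSpectralSpace.spectralSpace {X : Type*} [TopologicalSpace X] (hX : IsSpectralSpace X) :
    SpectralSpace X :=
  have ⟨hT0, hcpt, hsober, hbasis, hinter⟩ := hX
  { toT0Space := hT0, toCompactSpace := hcpt, toQuasiSober := hsober,
    toQuasiSeparatedSpace := ⟨hinter⟩,
    toPrespectralSpace := .of_isTopologicalBasis hbasis fun _ h => h.2 }

theorem constructibleTopology_le {X : Type*} [t : TopologicalSpace X] [PrespectralSpace X] :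
    constructibleTopology X ≤ t :=
  calc constructibleTopology X ≤ generateFrom {U | IsOpen U ∧ IsCompact U} :=
        le_generateFrom fun _ hU => hU.2.isOpen_constructibleTopology_of_isOpen hU.1
    _ = t := PrespectralSpace.isTopologicalBasis.eq_generateFrom.symm

theorem continuous_ofTopology_constructibleTopology {X : Type*} [TopologicalSpace X]
    [PrespectralSpace X] : Continuous (WithTopology.ofTopology (t := constructibleTopology X)) :=
  continuous_def.mpr fun _ hU => (WithTopology.isOpen_iff _).mpr (constructibleTopology_le _ hU)

theorem isCompact_sInter_of_isOpen_of_isCompact {X : Type*} [TopologicalSpace X] [CompactSpace X]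
    [QuasiSober X] [PrespectralSpace X] [QuasiSeparatedSpace X]
    {𝒪 : Set (Set X)} (h𝒪 : ∀ U ∈ 𝒪, IsOpen U ∧ IsCompact U) : IsCompact (⋂₀ 𝒪) := by
  have hclosed : IsClosed (WithTopology.ofTopology (t := constructibleTopology X) ⁻¹' ⋂₀ 𝒪) := by
    refine WithConstructibleTopology.isClosed_iff.mpr <|
      @isClosed_sInter _ (constructibleTopology X) _ fun U hU => ?_
    rw [← @isOpen_compl_iff]
    refine IsCompact.isOpen_constructibleTopology_of_isClosed ?_ (h𝒪 U hU).1.isClosed_compl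
    rw [compl_compl]
    exact (h𝒪 U hU).2
  have := hclosed.isCompact.image continuous_ofTopology_constructibleTopology
  rwa [image_preimage_eq _ (WithTopology.ofTopology_surjective _)] at this

theorem sInter_isOpen_isCompact_supersets_eq {X : Type*} [TopologicalSpace X] [PrespectralSpace X]
    {Y : Set X} (hsat : IsSatd Y) (hY : IsCompact Y) :
    ⋂₀ {U | IsOpen U ∧ IsCompact U ∧ Y ⊆ U} = Y := by
  obtain ⟨𝒪, h𝒪, rfl⟩ := hsat
  refine subset_antisymm (subset_sInter fun U hU => ?_) (subset_sInter fun U hU => hU.2.2)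
  obtain ⟨W, hWc, hWo, hYW, hWU⟩ := PrespectralSpace.exists_isCompact_and_isOpen_between hY
    (h𝒪 U hU) (sInter_subset_of_mem hU)
  exact fun x hx => hWU (hx W ⟨hWo, hWc, hYW⟩)

/-- In a spectral space, a subset is an intersection of quasi-compact
open subsets (i.e. inverse-closed) iff it is saturated and quasi-compact. -/
theorem stmt1 {X : Type*} [TopologicalSpace X] (hX : IsSpectralSpace X) (Y : Set X) :
    InvClosed Y ↔ IsSatd Y ∧ IsCompact Y := by
  have := hX.spectralSpace
  constructor
  · rintro ⟨𝒪, h𝒪, rfl⟩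
    exact ⟨⟨𝒪, fun U hU => (h𝒪 U hU).1, rfl⟩, isCompact_sInter_of_isOpen_of_isCompact h𝒪⟩
  · rintro ⟨hsat, hY⟩
    exact ⟨_, fun U hU => ⟨hU.1, hU.2.1⟩, (sInter_isOpen_isCompact_supersets_eq hsat hY).symm⟩
end

section
/- For a topological space X, the following are equivalent: (i) X is a spectral space; (ii) X is stably compact and the quasi-compact open subsets of X form a basis for the topology. -/
open Set TopologicalSpace Topology

/-- A topological space is *stably compact* if it is T0, quasi-compact, locally
quasi-compact, coherent and sober. -/
def IsStablyCompact (X : Type*) [TopologicalSpace X] : Prop :=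
  T0Space X ∧ CompactSpace X ∧
    (∀ U : Set X, IsOpen U → ∀ x ∈ U,
      ∃ K V : Set X, IsCompact K ∧ IsOpen V ∧ x ∈ V ∧ V ⊆ K ∧ K ⊆ U) ∧
    (∀ 𝒦 : Set (Set X), 𝒦.Finite → (∀ K ∈ 𝒦, IsCompact K ∧ IsSatd K) →
      IsCompact (⋂₀ 𝒦)) ∧
    QuasiSober X

/-!
The only substantial point is that a spectral space is coherent. In a space with a basis of
compact opens, a compact saturated set is the intersection of the compact opens containing it,
hence closed in the constructible topology. By Hochster's theorem the constructible topology of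
a spectral space is compact, and it is finer than the original topology, so its closed sets, in
particular all intersections of compact saturated sets, are compact. Conversely, open sets are
saturated, so coherence makes the compact opens closed under finite intersections.
-/

section

variable {X : Type*} [TopologicalSpace X]

lemma IsOpen.isSatd {U : Set X} (hU : IsOpen U) : IsSatd U :=
  ⟨{U}, by simpa using hU, (sInter_singleton U).symm⟩

lemma IsSpectralSpace.spectralSpace_s2 (h : IsSpectralSpace X) : SpectralSpace X := by
  obtain ⟨hT0, hcompact, hsober, hbasis, hinter⟩ := h
  exact { toQuasiSeparatedSpace := ⟨hinter⟩, toPrespectralSpace := ⟨hbasis⟩ }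

lemma isOpen_constructibleTopology_of_isOpen [PrespectralSpace X] {U : Set X} (hU : IsOpen U) :
    IsOpen[constructibleTopology X] U := by
  obtain ⟨𝒲, h𝒲, rfl⟩ := PrespectralSpace.isTopologicalBasis.open_eq_sUnion hU
  exact @isOpen_sUnion X (constructibleTopology X) _
    fun W hW ↦ (h𝒲 hW).2.isOpen_constructibleTopology_of_isOpen (h𝒲 hW).1

lemma IsCompact.isClosed_constructibleTopology_of_isOpen {W : Set X} (hWc : IsCompact W)
    (hWo : IsOpen W) : IsClosed[constructibleTopology X] W := by
  rw [← @isOpen_compl_iff X _ (constructibleTopology X)]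
  exact IsCompact.isOpen_constructibleTopology_of_isClosed (by rwa [compl_compl])
    hWo.isClosed_compl

lemma IsSatd.sInter_isCompact_isOpen_superset [PrespectralSpace X] {K : Set X}
    (hKs : IsSatd K) (hKc : IsCompact K) :
    ⋂₀ {W | IsCompact W ∧ IsOpen W ∧ K ⊆ W} = K := by
  obtain ⟨𝒪, h𝒪, rfl⟩ := hKs
  refine (subset_sInter fun U hU ↦ ?_).antisymm (subset_sInter fun W hW ↦ hW.2.2)
  obtain ⟨W, hWc, hWo, hKW, hWU⟩ := PrespectralSpace.exists_isCompact_and_isOpen_between hKc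
    (h𝒪 U hU) (sInter_subset_of_mem hU)
  exact fun x hx ↦ hWU (hx W ⟨hWc, hWo, hKW⟩)

lemma IsSatd.isClosed_constructibleTopology [PrespectralSpace X] {K : Set X} (hKs : IsSatd K)
    (hKc : IsCompact K) : IsClosed[constructibleTopology X] K := by
  rw [← hKs.sInter_isCompact_isOpen_superset hKc]
  exact @isClosed_sInter X (constructibleTopology X) _
    fun W hW ↦ hW.1.isClosed_constructibleTopology_of_isOpen hW.2.1

lemma isCompact_of_isClosed_constructibleTopology [CompactSpace X] [QuasiSober X]
    [PrespectralSpace X] [QuasiSeparatedSpace X] {S : Set X}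
    (hS : IsClosed[constructibleTopology X] S) : IsCompact S := by
  have hcont : Continuous (WithTopology.ofTopology (t := constructibleTopology X)) :=
    ⟨fun _ hU ↦ isOpen_constructibleTopology_of_isOpen hU⟩
  have hS' : IsClosed (WithTopology.ofTopology (t := constructibleTopology X) ⁻¹' S) :=
    (WithTopology.isClosed_iff _).2 hS
  simpa [image_preimage_eq S (WithTopology.ofTopology_surjective _)] using
    hS'.isCompact.image hcont

lemma SpectralSpace.isCompact_sInter_of_isSatd [SpectralSpace X] {𝒦 : Set (Set X)}
    (h𝒦 : ∀ K ∈ 𝒦, IsCompact K ∧ IsSatd K) : IsCompact (⋂₀ 𝒦) :=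
  isCompact_of_isClosed_constructibleTopology <| @isClosed_sInter X (constructibleTopology X) _
    fun K hK ↦ (h𝒦 K hK).2.isClosed_constructibleTopology (h𝒦 K hK).1

end

/-- A space is spectral iff it is stably compact and the quasi-compact
open subsets form a basis of its topology. -/
theorem stmt2 {X : Type*} [TopologicalSpace X] :
    IsSpectralSpace X ↔
      IsStablyCompact X ∧ IsTopologicalBasis {U : Set X | IsOpen U ∧ IsCompact U} := by
  constructor
  · intro h
    have := h.spectralSpace_s2
    obtain ⟨hT0, hcompact, hsober, hbasis, -⟩ := h
    refine ⟨⟨hT0, hcompact, fun U hU x hx ↦ ?_,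
      fun 𝒦 _ h𝒦 ↦ SpectralSpace.isCompact_sInter_of_isSatd h𝒦, hsober⟩, hbasis⟩
    obtain ⟨V, ⟨hVo, hVc⟩, hxV, hVU⟩ := hbasis.exists_subset_of_mem_open hx hU
    exact ⟨V, V, hVc, hVo, hxV, subset_rfl, hVU⟩
  · rintro ⟨⟨hT0, hcompact, -, hcoherent, hsober⟩, hbasis⟩
    refine ⟨hT0, hcompact, hsober, hbasis, fun U V hUo hUc hVo hVc ↦ ?_⟩
    simpa using hcoherent {U, V} (by simp) (by simp [hUc, hVc, hUo.isSatd, hVo.isSatd])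
end

section
/- Let X be a spectral space. The canonical map φ : X → 𝒳(X), defined by φ(x) := {x}^gen, is a spectral topological embedding: it is injective, a homeomorphism onto its image, and the preimage of every quasi-compact open subset of 𝒳(X) is a quasi-compact open subset of X. In particular, φ is an order-preserving and order-reflecting embedding for the orders induced by the topologies. -/
/-!
For `Ω` open, `{x}^gen ⊆ Ω` iff `x ∈ Ω`, so `φ` pulls the basic open `𝒰(Ω)` back to `Ω`. As the
quasi-compact opens form a basis of `X`, `φ` induces the topology of `X`; it is injective because
`X` is T0, and an inducing map preserves and reflects specialization. Since quasi-compact opens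
are closed under finite intersections, the `𝒰(Ω)` form a basis of `𝒳(X)`, so a quasi-compact open
of `𝒳(X)` is a finite union of them and its preimage a finite union of quasi-compact opens.
-/

open Set TopologicalSpace Topology

section Generization

variable {X : Type*} [TopologicalSpace X]

lemma spord_iff_specializes {x y : X} : spord x y ↔ x ⤳ y :=
  specializes_iff_mem_closure.symm

lemma mem_genOf_singleton {x z : X} : z ∈ genOf {x} ↔ z ⤳ x := by
  simp [genOf, spord_iff_specializes]

lemma genOf_singleton_subset_iff {x : X} {Ω : Set X} (hΩ : IsOpen Ω) :
    genOf {x} ⊆ Ω ↔ x ∈ Ω :=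
  ⟨fun h ↦ h (mem_genOf_singleton.mpr le_rfl),
    fun hx _ hz ↦ (mem_genOf_singleton.mp hz).mem_open hΩ hx⟩

/-- `{x}^gen` is the intersection of the quasi-compact open neighbourhoods of `x`. -/
lemma invClosed_genOf_singleton (hB : IsTopologicalBasis {U : Set X | IsOpen U ∧ IsCompact U})
    (x : X) : InvClosed (genOf {x}) := by
  refine ⟨{U | (IsOpen U ∧ IsCompact U) ∧ x ∈ U}, fun U hU ↦ hU.1, ?_⟩
  ext z
  rw [mem_genOf_singleton, hB.nhds_hasBasis.specializes_iff]
  simp [and_imp]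

end Generization

lemma specMap_of_isTopologicalBasis {X Y : Type*} [TopologicalSpace X] [TopologicalSpace Y]
    {f : X → Y} {B : Set (Set Y)} (hB : IsTopologicalBasis B)
    (hf : ∀ b ∈ B, IsOpen (f ⁻¹' b) ∧ IsCompact (f ⁻¹' b)) : SpecMap f := by
  intro W hWo hWc
  obtain ⟨S, hSB, rfl⟩ := hB.open_eq_sUnion hWo
  obtain ⟨T, hTS, hT, hcover⟩ := hWc.elim_finite_subcover_image (c := id)
    (fun b hb ↦ hB.isOpen (hSB hb)) (by rw [sUnion_eq_biUnion]; rfl)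
  have hW : ⋃₀ S = ⋃ b ∈ T, b :=
    hcover.antisymm (iUnion₂_subset fun b hb ↦ subset_sUnion_of_mem (hTS hb))
  rw [hW, preimage_iUnion₂]
  exact ⟨isOpen_biUnion fun b hb ↦ (hf b (hSB (hTS hb))).1,
    hT.isCompact_biUnion fun b hb ↦ (hf b (hSB (hTS hb))).2⟩

namespace XCal

variable {X : Type*} [TopologicalSpace X]

variable (X) in
def basicOpens : Set (Set (XCal X)) :=
  {S | ∃ Ω : Set X, IsOpen Ω ∧ IsCompact Ω ∧ S = {Y : XCal X | (Y : Set X) ⊆ Ω}}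

lemma isTopologicalBasis_basicOpens [CompactSpace X]
    (hinter : ∀ U V : Set X, IsOpen U → IsCompact U → IsOpen V → IsCompact V →
      IsCompact (U ∩ V)) :
    IsTopologicalBasis (basicOpens X) := by
  refine ⟨?_, ?_, rfl⟩
  · rintro _ ⟨Ω₁, hΩ₁o, hΩ₁c, rfl⟩ _ ⟨Ω₂, hΩ₂o, hΩ₂c, rfl⟩ Y hY
    refine ⟨{Z : XCal X | (Z : Set X) ⊆ Ω₁ ∩ Ω₂},
      ⟨Ω₁ ∩ Ω₂, hΩ₁o.inter hΩ₂o, hinter _ _ hΩ₁o hΩ₁c hΩ₂o hΩ₂c, rfl⟩, subset_inter hY.1 hY.2,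
      fun Z hZ ↦ subset_inter_iff.mp hZ⟩
  · exact sUnion_eq_univ_iff.mpr fun Y ↦
      ⟨_, ⟨univ, isOpen_univ, isCompact_univ, rfl⟩, subset_univ (Y : Set X)⟩

def gen (hB : IsTopologicalBasis {U : Set X | IsOpen U ∧ IsCompact U}) (x : X) : XCal X :=
  ⟨genOf {x}, ⟨x, mem_genOf_singleton.mpr le_rfl⟩, invClosed_genOf_singleton hB x⟩

variable {hB : IsTopologicalBasis {U : Set X | IsOpen U ∧ IsCompact U}}

lemma preimage_gen_setOf_subset {Ω : Set X} (hΩ : IsOpen Ω) :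
    gen hB ⁻¹' {Y : XCal X | (Y : Set X) ⊆ Ω} = Ω :=
  ext fun _ ↦ genOf_singleton_subset_iff hΩ

lemma preimage_gen_image_basicOpens :
    preimage (gen hB) '' basicOpens X = {U : Set X | IsOpen U ∧ IsCompact U} := by
  ext U
  constructor
  · rintro ⟨_, ⟨Ω, hΩo, hΩc, rfl⟩, rfl⟩
    rw [preimage_gen_setOf_subset hΩo]
    exact ⟨hΩo, hΩc⟩
  · rintro ⟨hUo, hUc⟩
    exact ⟨_, ⟨U, hUo, hUc, rfl⟩, preimage_gen_setOf_subset hUo⟩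

lemma isInducing_gen : IsInducing (gen hB) := by
  rw [isInducing_iff, show XCal.instTop X = generateFrom (basicOpens X) from rfl,
    induced_generateFrom_eq, preimage_gen_image_basicOpens]
  exact hB.eq_generateFrom

lemma specMap_gen [CompactSpace X]
    (hinter : ∀ U V : Set X, IsOpen U → IsCompact U → IsOpen V → IsCompact V →
      IsCompact (U ∩ V)) :
    SpecMap (gen hB) :=
  specMap_of_isTopologicalBasis (isTopologicalBasis_basicOpens hinter) fun _ hb ↦
    (preimage_gen_image_basicOpens (hB := hB)).subset (mem_image_of_mem _ hb)

end XCal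

/-- The canonical map `φ : X → 𝒳(X)`, `x ↦ {x}^gen`, is a spectral
topological embedding, and it preserves and reflects the order induced by the
topologies. -/
theorem stmt7 {X : Type*} [TopologicalSpace X] (hX : IsSpectralSpace X) :
    ∃ φ : X → XCal X, (∀ x : X, (φ x : Set X) = genOf {x}) ∧
      IsEmbedding φ ∧ SpecMap φ ∧
      ∀ x y : X, spord x y ↔ spord (φ x) (φ y) := by
  obtain ⟨_, _, -, hB, hinter⟩ := hX
  have hφ : IsInducing (XCal.gen hB) := XCal.isInducing_gen
  refine ⟨XCal.gen hB, fun _ ↦ rfl, hφ.isEmbedding, XCal.specMap_gen hinter, fun x y ↦ ?_⟩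
  rw [spord_iff_specializes, spord_iff_specializes, hφ.specializes_iff]
end

section
/- Let X be a spectral space and φ : X → 𝒳(X) the canonical embedding x ↦ {x}^gen. Then the image φ(X) is dense in 𝒳(X) with respect to the Zariski topology. -/
open Set TopologicalSpace Topology

/- Saturated (in particular inverse-closed) sets are closed under generization, so `φ y ⊆ Y`
for every `y ∈ Y`. Since the basic open sets `𝒰(Ω)` of `𝒳(X)` are downward closed under
inclusion, `φ y` specializes to `Y`, i.e. `Y` lies in the closure of `φ(X)`. -/

theorem IsSatd.genOf_subset {X : Type*} [TopologicalSpace X] {Y S : Set X} (hY : IsSatd Y)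
    (hS : S ⊆ Y) : genOf S ⊆ Y := by
  obtain ⟨𝒪, h𝒪, rfl⟩ := hY
  rintro z ⟨s, hs, hzs⟩
  exact mem_sInter.2 fun U hU =>
    (specializes_iff_mem_closure.2 hzs).mem_open (h𝒪 U hU) (hS hs U hU)

theorem InvClosed.isSatd {X : Type*} [TopologicalSpace X] {Y : Set X} (hY : InvClosed Y) :
    IsSatd Y := by
  obtain ⟨𝒪, h𝒪, rfl⟩ := hY
  exact ⟨𝒪, fun U hU => (h𝒪 U hU).1, rfl⟩

theorem XCal.specializes_of_subset {X : Type*} [TopologicalSpace X] {Y Z : XCal X}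
    (h : (Z : Set X) ⊆ Y) : Z ⤳ Y := by
  rw [Specializes, nhds_generateFrom, nhds_generateFrom]
  refine iInf₂_mono' fun s ⟨hYs, hs⟩ => ⟨s, ⟨?_, hs⟩, le_rfl⟩
  obtain ⟨Ω, -, -, rfl⟩ := hs
  exact h.trans hYs

theorem stmt9_general {X : Type*} [TopologicalSpace X]
    (φ : X → XCal X) (hφ : ∀ x : X, (φ x : Set X) = genOf {x}) :
    Dense (Set.range φ) := by
  intro Y
  obtain ⟨y, hy⟩ := Y.2.1
  have hφy : (φ y : Set X) ⊆ Y := by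
    rw [hφ]
    exact Y.2.2.isSatd.genOf_subset (singleton_subset_iff.2 hy)
  exact (XCal.specializes_of_subset hφy).mem_closed isClosed_closure
    (subset_closure (mem_range_self y))

/-- The image of the canonical embedding `φ : X → 𝒳(X)`, `x ↦ {x}^gen`,
is dense in `𝒳(X)` with respect to the Zariski topology. -/
theorem stmt9 {X : Type*} [TopologicalSpace X] (hX : IsSpectralSpace X)
    (φ : X → XCal X) (hφ : ∀ x : X, (φ x : Set X) = genOf {x}) :
    Dense (Set.range φ) :=
  stmt9_general φ hφ
end
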